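/- arXiv:1608.08619 — 9 statements merged into one kernel-verified Lean document; each statement's English description precedes it below -/
import Mathlib

section
/- Let R be a G-graded unital ring. If R is G-controlled, then for each g ∈ G the component R_g is a nonzero simple R_e-bimodule. -/
open DirectSum Pointwise

namespace Controlled

variable {G R : Type*} [AddGroup G] [DecidableEq G] [Ring R]

/-- `P` is an `R_e`-sub-bimodule of `R` (w.r.t. the grading `𝒜`, written additively,
so `R_e = 𝒜 0`). -/
def IsSubBimodule (𝒜 : G → AddSubgroup R) (P : AddSubgroup R) : Prop :=
  ∀ a ∈ 𝒜 0, ∀ x ∈ P, a * x ∈ P ∧ x * a ∈ P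

/-- The `R_e`-bimodule `R_H = ⊕_{h ∈ H} R_h` (internally, the subgroup generated by
the `R_h`, `h ∈ H`; the sum is automatically direct). `R_∅ = ⊥ = {0}`. -/
def RH (𝒜 : G → AddSubgroup R) (H : Set G) : AddSubgroup R := ⨆ h ∈ H, 𝒜 h

/-- An `R_e`-bimodule isomorphism between additive subgroups `P` and `Q` of `R`:
an additive equivalence compatible with left and right multiplication by `R_e = 𝒜 0`. -/
structure BimodIso (𝒜 : G → AddSubgroup R) (P Q : AddSubgroup R) where
  toEquiv : P ≃+ Q
  map_left : ∀ (a x : R), a ∈ 𝒜 0 → ∀ (hx : x ∈ P) (hax : a * x ∈ P),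
    (toEquiv ⟨a * x, hax⟩ : R) = a * (toEquiv ⟨x, hx⟩ : R)
  map_right : ∀ (a x : R), a ∈ 𝒜 0 → ∀ (hx : x ∈ P) (hxa : x * a ∈ P),
    (toEquiv ⟨x * a, hxa⟩ : R) = (toEquiv ⟨x, hx⟩ : R) * a

/-- `R` is `G`-controlled: `H ↦ R_H` is a bijection from subsets of `G` onto the
`R_e`-sub-bimodules of `R`, and `R_S ≅ R_T` (as `R_e`-bimodules) iff `S = T`. -/
def IsControlled (𝒜 : G → AddSubgroup R) : Prop :=
  (∀ H : Set G, IsSubBimodule 𝒜 (RH 𝒜 H)) ∧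
  Function.Injective (RH 𝒜) ∧
  (∀ P : AddSubgroup R, IsSubBimodule 𝒜 P → ∃ H : Set G, RH 𝒜 H = P) ∧
  (∀ S T : Set G, Nonempty (BimodIso 𝒜 (RH 𝒜 S) (RH 𝒜 T)) ↔ S = T)

/-- `P` is a (nonzero) simple `R_e`-bimodule contained in `R`. -/
def IsSimpleBimod (𝒜 : G → AddSubgroup R) (P : AddSubgroup R) : Prop :=
  P ≠ ⊥ ∧ ∀ Q : AddSubgroup R, Q ≤ P → IsSubBimodule 𝒜 Q → Q = ⊥ ∨ Q = P

/-- The product `AB` of two additive subgroups of `R`: all finite sums of products. -/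
def mulSub (A B : AddSubgroup R) : AddSubgroup R :=
  AddSubgroup.closure ((A : Set R) * (B : Set R))

/-- `R` is strongly graded: `R_g R_h = R_{g+h}` for all `g, h`. -/
def IsStronglyGraded (𝒜 : G → AddSubgroup R) : Prop :=
  ∀ g h : G, mulSub (𝒜 g) (𝒜 h) = 𝒜 (g + h)

/-- `C_R(R_e) = Z(R_e)` as subsets of `R`. -/
def CentralizerEqCenter (𝒜 : G → AddSubgroup R) : Prop :=
  {x : R | ∀ r ∈ 𝒜 0, x * r = r * x} = {x : R | x ∈ 𝒜 0 ∧ ∀ r ∈ 𝒜 0, x * r = r * x}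

/-- A two-sided ideal `I` is graded if each homogeneous component of each of its
elements again lies in `I` (equivalently, `I = ⊕_g (I ∩ R_g)`). -/
def IsGradedIdeal (𝒜 : G → AddSubgroup R) [GradedRing 𝒜] (I : TwoSidedIdeal R) : Prop :=
  ∀ x ∈ I, ∀ g : G, (DirectSum.decompose 𝒜 x g : R) ∈ I

/-- `R` is graded simple: the only graded two-sided ideals are `{0}` and `R`. -/
def IsGradedSimple (𝒜 : G → AddSubgroup R) [GradedRing 𝒜] : Prop :=
  ∀ I : TwoSidedIdeal R, IsGradedIdeal 𝒜 I → I = ⊥ ∨ I = ⊤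

end Controlled

variable {G R : Type*} [AddGroup G] [DecidableEq G] [Ring R]


lemma RH_singleton (𝒜 : G → AddSubgroup R) (g : G) :
    Controlled.RH 𝒜 ({g} : Set G) = 𝒜 g := by
  simp [Controlled.RH]

lemma RH_empty (𝒜 : G → AddSubgroup R) :
    Controlled.RH 𝒜 (∅ : Set G) = ⊥ := by
  simp [Controlled.RH]

lemma comp_ne_bot (𝒜 : G → AddSubgroup R)
    (hc : Controlled.IsControlled 𝒜) (g : G) : 𝒜 g ≠ ⊥ := by
  intro h
  have : ({g} : Set G) = ∅ := hc.2.1 (by rw [RH_singleton, RH_empty, h])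
  exact (Set.singleton_nonempty g).ne_empty this

/-- If `R` is `G`-controlled then each `R_g` is a nonzero simple
`R_e`-bimodule. -/
theorem stmt2 (𝒜 : G → AddSubgroup R) [GradedRing 𝒜]
    (hc : Controlled.IsControlled 𝒜) (g : G) :
    Controlled.IsSimpleBimod 𝒜 (𝒜 g) := by
  refine ⟨comp_ne_bot 𝒜 hc g, fun Q hQg hQ => ?_⟩
  obtain ⟨H, hH⟩ := hc.2.2.1 Q hQ
  have hsub : H ⊆ {g} := by
    intro h hh
    have hle : 𝒜 h ≤ Q := hH ▸ le_iSup₂ (f := fun i (_ : i ∈ H) => 𝒜 i) h hh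
    by_contra hne
    simp only [Set.mem_singleton_iff] at hne
    apply comp_ne_bot 𝒜 hc h
    rw [AddSubgroup.eq_bot_iff_forall]
    intro x hx
    have hxg : x ∈ 𝒜 g := hQg (hle hx)
    have := DirectSum.decompose_of_mem_ne 𝒜 hx hne
    rwa [DirectSum.decompose_of_mem_same 𝒜 hxg] at this
  rcases Set.subset_singleton_iff_eq.mp hsub with h | h
  · left; rw [← hH, h, RH_empty]
  · right; rw [← hH, h, RH_singleton]
end

section
/- Let R be a G-graded unital ring. If R is G-controlled, then the identity component R_e is a simple ring. -/
open DirectSum Pointwise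

variable {G R : Type*} [AddGroup G] [DecidableEq G] [Ring R]


/-- If `R` is `G`-controlled then `R_e` is a simple ring. -/
theorem stmt3 (𝒜 : G → AddSubgroup R) [GradedRing 𝒜]
    (hc : Controlled.IsControlled 𝒜) :
    IsSimpleRing ↥(𝒜 0) := by
  obtain ⟨hsub, hinj, hsurj, hiso⟩ := hc
  -- each 𝒜 g is nonzero
  have hRH_single : ∀ g : G, Controlled.RH 𝒜 {g} = 𝒜 g := by
    intro g; simp [Controlled.RH]
  have hRH_empty : Controlled.RH 𝒜 (∅ : Set G) = ⊥ := by
    simp [Controlled.RH]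
  have hne : ∀ g : G, 𝒜 g ≠ ⊥ := by
    intro g hg
    have : Controlled.RH 𝒜 {g} = Controlled.RH 𝒜 ∅ := by
      rw [hRH_single, hRH_empty, hg]
    have := hinj this
    simp [Set.eq_empty_iff_forall_notMem] at this
  have hnt : Nontrivial ↥(𝒜 0) := by
    obtain ⟨x, hx0⟩ := (AddSubgroup.ne_bot_iff_exists_ne_zero).1 (hne 0)
    exact ⟨x, 0, hx0⟩
  have hbt : (⊥ : TwoSidedIdeal ↥(𝒜 0)) ≠ ⊤ := by
    intro h
    have h1 : (1 : ↥(𝒜 0)) ∈ (⊥ : TwoSidedIdeal ↥(𝒜 0)) := by rw [h]; trivial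
    rw [TwoSidedIdeal.mem_bot] at h1
    exact one_ne_zero (α := ↥(𝒜 0)) h1
  refine ⟨{ toNontrivial := ⟨⊥, ⊤, hbt⟩, eq_bot_or_eq_top := ?_ }⟩
  intro I
  -- the image of I in R
  set P : AddSubgroup R :=
    { carrier := {x : R | ∃ y : ↥(𝒜 0), y ∈ I ∧ (y : R) = x}
      zero_mem' := ⟨0, I.zero_mem, rfl⟩
      add_mem' := by
        rintro _ _ ⟨y, hy, rfl⟩ ⟨z, hz, rfl⟩
        exact ⟨y + z, I.add_mem hy hz, rfl⟩
      neg_mem' := by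
        rintro _ ⟨y, hy, rfl⟩
        exact ⟨-y, I.neg_mem hy, rfl⟩ } with hP
  have hPle : P ≤ 𝒜 0 := by
    rintro _ ⟨y, hy, rfl⟩; exact y.2
  have hPsub : Controlled.IsSubBimodule 𝒜 P := by
    rintro a ha x ⟨y, hy, rfl⟩
    exact ⟨⟨⟨a, ha⟩ * y, I.mul_mem_left _ _ hy, rfl⟩,
      ⟨y * ⟨a, ha⟩, I.mul_mem_right _ _ hy, rfl⟩⟩
  obtain ⟨H, hH⟩ := hsurj P hPsub
  have hHsub : H ⊆ {0} := by
    intro h hh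
    by_contra hne0
    have h1 : 𝒜 h ≤ P := by
      rw [← hH]
      exact le_iSup_of_le h (le_iSup_of_le hh le_rfl)
    obtain ⟨x, hx0⟩ := (AddSubgroup.ne_bot_iff_exists_ne_zero).1 (hne h)
    have hx00 : (x : R) ∈ 𝒜 0 := hPle (h1 x.2)
    have := DirectSum.decompose_of_mem_same 𝒜 x.2
    rw [DirectSum.decompose_of_mem_ne 𝒜 hx00 (Ne.symm (by simpa using hne0))] at this
    exact hx0 (Subtype.ext this.symm)
  rcases Set.subset_singleton_iff_eq.1 hHsub with hE | hE
  · left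
    subst hE
    rw [hRH_empty] at hH
    refine TwoSidedIdeal.ext fun y => ?_
    simp only [TwoSidedIdeal.mem_bot]
    constructor
    · intro hy
      have : (y : R) ∈ P := ⟨y, hy, rfl⟩
      rw [← hH] at this
      exact Subtype.ext (by simpa using this)
    · rintro rfl; exact I.zero_mem
  · right
    subst hE
    rw [hRH_single] at hH
    refine TwoSidedIdeal.ext fun y => ?_
    simp only [TwoSidedIdeal.mem_top, iff_true]
    have : (y : R) ∈ P := by rw [← hH]; exact y.2
    obtain ⟨z, hz, hzy⟩ := this
    rwa [show z = y from Subtype.ext hzy] at hz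
end

section
/- Let R be a G-graded unital ring. If R is G-controlled, then the centralizer of R_e in R equals the center of R_e, i.e. C_R(R_e) = Z(R_e). -/
open DirectSum Pointwise

variable {G R : Type*} [AddGroup G] [DecidableEq G] [Ring R]


/-- If `R` is `G`-controlled then `C_R(R_e) = Z(R_e)`. -/
theorem stmt4 (𝒜 : G → AddSubgroup R) [GradedRing 𝒜]
    (hc : Controlled.IsControlled 𝒜) :
    Controlled.CentralizerEqCenter 𝒜 := by
  obtain ⟨hbm, hinj, hsurj, hiso⟩ := hc
  ext x
  simp only [Set.mem_setOf_eq]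
  constructor
  · intro hx
    refine ⟨?_, hx⟩
    have mulmem : ∀ a b : R, a ∈ 𝒜 0 → b ∈ 𝒜 0 → a * b ∈ 𝒜 0 := by
      intro a b ha hb
      have := SetLike.mul_mem_graded ha hb
      simpa using this
    -- P = R_e * x
    set P : AddSubgroup R := AddSubgroup.map (AddMonoidHom.mulRight x) (𝒜 0) with hPdef
    have memP : ∀ y : R, y ∈ P ↔ ∃ b ∈ 𝒜 0, b * x = y := by
      intro y
      simp [hPdef, AddSubgroup.mem_map, AddMonoidHom.mulRight_apply]
    -- K = kernel
    set K : AddSubgroup R := (𝒜 0) ⊓ AddSubgroup.comap (AddMonoidHom.mulRight x) ⊥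
      with hKdef
    have memK : ∀ a : R, a ∈ K ↔ a ∈ 𝒜 0 ∧ a * x = 0 := by
      intro a
      simp [hKdef, AddSubgroup.mem_comap, AddMonoidHom.mulRight_apply]
    have hPsub : Controlled.IsSubBimodule 𝒜 P := by
      intro a ha y hy
      obtain ⟨b, hb, rfl⟩ := (memP y).mp hy
      constructor
      · exact (memP _).mpr ⟨a * b, mulmem a b ha hb, mul_assoc a b x⟩
      · refine (memP _).mpr ⟨b * a, mulmem b a hb ha, ?_⟩
        rw [mul_assoc, ← hx a ha, ← mul_assoc]
    have hKsub : Controlled.IsSubBimodule 𝒜 K := by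
      intro a ha k hk
      obtain ⟨hk0, hkx⟩ := (memK k).mp hk
      constructor
      · exact (memK _).mpr ⟨mulmem a k ha hk0, by rw [mul_assoc, hkx, mul_zero]⟩
      · refine (memK _).mpr ⟨mulmem k a hk0 ha, ?_⟩
        rw [mul_assoc, ← hx a ha, ← mul_assoc, hkx, zero_mul]
    obtain ⟨S, hS⟩ := hsurj K hKsub
    obtain ⟨H, hH⟩ := hsurj P hPsub
    -- S ⊆ {0}
    have hSsub : S ⊆ {0} := by
      intro s hs
      by_contra hs0
      have hs0' : s ≠ 0 := hs0
      have hAs : 𝒜 s = ⊥ := by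
        rw [eq_bot_iff]
        intro y hy
        have hle : 𝒜 s ≤ Controlled.RH 𝒜 S := le_iSup₂ (f := fun h _ => 𝒜 h) s hs
        have hyK : y ∈ K := hS ▸ hle hy
        have hy0 : y ∈ 𝒜 0 := ((memK y).mp hyK).1
        have h1 := DirectSum.decompose_of_mem_same 𝒜 hy
        have h2 := DirectSum.decompose_of_mem_ne 𝒜 hy0 (Ne.symm hs0')
        rw [h2] at h1
        simpa using h1.symm
      have heq : Controlled.RH 𝒜 S = Controlled.RH 𝒜 (S \ {s}) := by
        unfold Controlled.RH
        apply le_antisymm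
        · refine iSup₂_le fun h hh => ?_
          by_cases hhs : h = s
          · rw [hhs, hAs]; exact bot_le
          · exact le_iSup₂ (f := fun h _ => 𝒜 h) h ⟨hh, hhs⟩
        · exact iSup₂_le fun h hh => le_iSup₂ (f := fun h _ => 𝒜 h) h hh.1
      have := hinj heq
      have : s ∈ S \ ({s} : Set G) := this ▸ hs
      exact this.2 rfl
    by_cases h0 : (0 : G) ∈ S
    · -- S = {0}, so 1 ∈ K, hence x = 0
      have hSeq : S = ({0} : Set G) := Set.Subset.antisymm hSsub (by
        intro t ht
        rwa [Set.mem_singleton_iff.mp ht])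
      have hK0 : K = 𝒜 0 := by
        rw [← hS, hSeq]
        unfold Controlled.RH
        simp
      have h1K : (1 : R) ∈ K := hK0 ▸ SetLike.one_mem_graded 𝒜
      have hx0 : x = 0 := by
        have := ((memK 1).mp h1K).2
        rwa [one_mul] at this
      rw [hx0]; exact zero_mem _
    · -- S = ∅, so the map a ↦ a * x is injective
      have hSempty : S = (∅ : Set G) := by
        rw [Set.eq_empty_iff_forall_notMem]
        intro s hs
        exact h0 (Set.mem_singleton_iff.mp (hSsub hs) ▸ hs)
      have hKbot : K = ⊥ := by
        rw [← hS, hSempty]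
        unfold Controlled.RH
        simp
      -- build the bimodule isomorphism 𝒜 0 ≃+ P
      let f : (𝒜 0) →+ P :=
        { toFun := fun a => ⟨(a : R) * x, (memP _).mpr ⟨a, a.2, rfl⟩⟩
          map_zero' := by ext; simp
          map_add' := by intro a b; ext; simp [add_mul] }
      have hfbij : Function.Bijective f := by
        constructor
        · intro a b hab
          have h1 : (a : R) * x = (b : R) * x := congrArg Subtype.val hab
          have h2 : ((a : R) - b) * x = 0 := by rw [sub_mul, h1, sub_self]
          have h3 : ((a : R) - b) ∈ K := (memK _).mpr ⟨sub_mem a.2 b.2, h2⟩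
          rw [hKbot] at h3
          have : (a : R) - b = 0 := h3
          exact Subtype.ext (sub_eq_zero.mp this)
        · rintro ⟨y, hy⟩
          obtain ⟨b, hb, rfl⟩ := (memP y).mp hy
          exact ⟨⟨b, hb⟩, rfl⟩
      let e := AddEquiv.ofBijective f hfbij
      have e1 : Controlled.RH 𝒜 ({0} : Set G) = 𝒜 0 := by
        unfold Controlled.RH
        simp
      have hHeq : ({0} : Set G) = H := by
        apply (hiso {0} H).mp
        rw [e1, hH]
        refine ⟨⟨e, ?_, ?_⟩⟩
        · intro a y ha hy hay
          show ((f ⟨a * y, hay⟩ : P) : R) = a * ((f ⟨y, hy⟩ : P) : R)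
          simp [f, mul_assoc]
        · intro a y ha hy hya
          show ((f ⟨y * a, hya⟩ : P) : R) = ((f ⟨y, hy⟩ : P) : R) * a
          simp only [f, AddMonoidHom.coe_mk, ZeroHom.coe_mk]
          rw [mul_assoc, ← hx a ha, ← mul_assoc]
      have hxP : x ∈ P := (memP x).mpr ⟨1, SetLike.one_mem_graded 𝒜, one_mul x⟩
      rw [← hH, ← hHeq, e1] at hxP
      exact hxP
  · rintro ⟨-, h⟩
    exact h
end

section
/- Let R be a G-graded unital ring. If R is G-controlled, then every two-sided ideal of R is a graded ideal, i.e. I = ⊕_{g∈G} (I ∩ R_g) for every ideal I. -/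
open DirectSum Pointwise

variable {G R : Type*} [AddGroup G] [DecidableEq G] [Ring R]


/-- If `R` is `G`-controlled then every two-sided ideal of `R` is graded. -/
theorem stmt5 (𝒜 : G → AddSubgroup R) [GradedRing 𝒜]
    (hc : Controlled.IsControlled 𝒜) (I : TwoSidedIdeal R) :
    Controlled.IsGradedIdeal 𝒜 I := by
  classical
  -- The ideal as an additive subgroup
  let P : AddSubgroup R :=
    { carrier := {x | x ∈ I}
      zero_mem' := I.zero_mem
      add_mem' := fun ha hb => I.add_mem ha hb
      neg_mem' := fun ha => I.neg_mem ha }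
  have hP : Controlled.IsSubBimodule 𝒜 P := fun a _ y hy =>
    ⟨I.mul_mem_left a y hy, I.mul_mem_right y a hy⟩
  obtain ⟨H, hH⟩ := hc.2.2.1 P hP
  -- RH 𝒜 H is closed under taking homogeneous components
  have key : ∀ y ∈ Controlled.RH 𝒜 H, ∀ g : G,
      (DirectSum.decompose 𝒜 y g : R) ∈ Controlled.RH 𝒜 H := by
    let K : AddSubgroup R :=
      { carrier := {y | ∀ g : G, (DirectSum.decompose 𝒜 y g : R) ∈ Controlled.RH 𝒜 H}
        zero_mem' := by
          intro g
          simp only [DirectSum.decompose_zero, DirectSum.zero_apply, ZeroMemClass.coe_zero]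
          exact (Controlled.RH 𝒜 H).zero_mem
        add_mem' := by
          intro a b ha hb g
          rw [DirectSum.decompose_add, DirectSum.add_apply, AddSubgroup.coe_add]
          exact (Controlled.RH 𝒜 H).add_mem (ha g) (hb g)
        neg_mem' := by
          intro a ha g
          rw [DirectSum.decompose_neg, DFinsupp.neg_apply, AddSubgroup.coe_neg]
          exact (Controlled.RH 𝒜 H).neg_mem (ha g) }
    have hle : Controlled.RH 𝒜 H ≤ K := by
      apply iSup₂_le
      intro h hh y hy g
      by_cases hgh : g = h
      · rw [hgh, DirectSum.decompose_of_mem_same 𝒜 hy]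
        exact (le_iSup₂ (f := fun (h' : G) (_ : h' ∈ H) => 𝒜 h') h hh) hy
      · rw [DirectSum.decompose_of_mem_ne 𝒜 hy (Ne.symm hgh)]
        exact (Controlled.RH 𝒜 H).zero_mem
    exact fun y hy => hle hy
  intro x hx g
  have hx' : x ∈ Controlled.RH 𝒜 H := hH ▸ hx
  have := key x hx' g
  rw [hH] at this
  exact this
end

section
/- Let S be a unital ring and let M and N be nonzero simple S-bimodules which are not isomorphic. Then for any nonzero x ∈ M and nonzero y ∈ N there exist n ∈ ℕ and elements s_1,…,s_n, t_1,…,t_n ∈ S such that Σ_{i=1}^n s_i x t_i ≠ 0 and Σ_{i=1}^n s_i y t_i = 0. -/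
/-!
Suppose every relation `∑ sᵢ • y • tᵢ = 0` forces `∑ sᵢ • x • tᵢ = 0`. Then the sub-bimodule
`W ≤ M × N` generated by `(x, y)` meets `M × 0` trivially. Simplicity of `N` forces it to meet
`0 × N` trivially as well, and simplicity of `M` and `N` makes both projections of `W` surjective,
so `W` is the graph of a bimodule isomorphism `M ≃ N`.
-/

/-- `M` is a (nonzero) simple `S`-bimodule: it is nonzero and has no nonzero proper
sub-bimodules (additive subgroups closed under both the left and right `S`-actions). -/
def IsSimpleBimodule (S M : Type*) [Ring S] [AddCommGroup M]
    [Module S M] [Module Sᵐᵒᵖ M] : Prop :=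
  (∃ m : M, m ≠ 0) ∧
    ∀ P : AddSubgroup M, (∀ s : S, ∀ m ∈ P, s • m ∈ P) →
      (∀ s : Sᵐᵒᵖ, ∀ m ∈ P, s • m ∈ P) → P = ⊥ ∨ P = ⊤

/-- An `S`-bimodule isomorphism: an additive equivalence commuting with both actions. -/
def IsBimoduleIso (S : Type*) {M N : Type*} [Ring S] [AddCommGroup M] [AddCommGroup N]
    [Module S M] [Module Sᵐᵒᵖ M] [Module S N] [Module Sᵐᵒᵖ N] (f : M ≃+ N) : Prop :=
  (∀ (s : S) (m : M), f (s • m) = s • f m) ∧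
    (∀ (s : Sᵐᵒᵖ) (m : M), f (s • m) = s • f m)

open MulOpposite

theorem AddSubgroup.exists_addEquiv_mem_iff_of_prod {M N : Type*} [AddCommGroup M]
    [AddCommGroup N] (W : AddSubgroup (M × N))
    (hfst : ∀ m, (m, (0 : N)) ∈ W → m = 0) (hsnd : ∀ n, ((0 : M), n) ∈ W → n = 0)
    (hfst_top : W.map (AddMonoidHom.fst M N) = ⊤) (hsnd_top : W.map (AddMonoidHom.snd M N) = ⊤) :
    ∃ e : M ≃+ N, ∀ m n, (m, n) ∈ W ↔ n = e m := by
  have uniq : ∀ {m n n'}, (m, n) ∈ W → (m, n') ∈ W → n = n' := fun h h' =>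
    sub_eq_zero.1 (hsnd _ (by simpa using W.sub_mem h h'))
  have hex (m : M) : ∃ n, (m, n) ∈ W := by
    obtain ⟨p, hp, rfl⟩ := (AddSubgroup.eq_top_iff' _).1 hfst_top m
    exact ⟨p.2, hp⟩
  choose g hg using hex
  let f : M →+ N := AddMonoidHom.mk' g fun m m' =>
    uniq (hg _) (by simpa using W.add_mem (hg m) (hg m'))
  have hf_inj : Function.Injective f := fun m m' (h : g m = g m') =>
    sub_eq_zero.1 (hfst _ (by simpa [h] using W.sub_mem (hg m) (hg m')))
  have hf_surj : Function.Surjective f := fun n => by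
    obtain ⟨p, hp, rfl⟩ := (AddSubgroup.eq_top_iff' _).1 hsnd_top n
    exact ⟨p.1, uniq (hg _) hp⟩
  exact ⟨AddEquiv.ofBijective f ⟨hf_inj, hf_surj⟩, fun m n =>
    ⟨fun h => uniq h (hg m), fun h => h ▸ hg m⟩⟩

section SubBimodule

variable {S M N : Type*} [Ring S] [AddCommGroup M] [AddCommGroup N]
  [Module S M] [Module Sᵐᵒᵖ M] [Module S N] [Module Sᵐᵒᵖ N]

variable (S) in
def IsSubBimodule (P : AddSubgroup M) : Prop :=
  (∀ s : S, ∀ m ∈ P, s • m ∈ P) ∧ (∀ s : Sᵐᵒᵖ, ∀ m ∈ P, s • m ∈ P)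

theorem IsSimpleBimodule.eq_top_of_mem (hM : IsSimpleBimodule S M) {P : AddSubgroup M}
    (hP : IsSubBimodule S P) {m : M} (hm : m ∈ P) (hm0 : m ≠ 0) : P = ⊤ :=
  (hM.2 P hP.1 hP.2).resolve_left fun h => hm0 (by simpa [h] using hm)

theorem IsSubBimodule.map {P : AddSubgroup M} (hP : IsSubBimodule S P) (f : M →+ N)
    (hl : ∀ (s : S) m, f (s • m) = s • f m) (hr : ∀ (s : Sᵐᵒᵖ) m, f (s • m) = s • f m) :
    IsSubBimodule S (P.map f) := by
  constructor
  · rintro s _ ⟨m, hm, rfl⟩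
    exact ⟨s • m, hP.1 s m hm, hl s m⟩
  · rintro s _ ⟨m, hm, rfl⟩
    exact ⟨s • m, hP.2 s m hm, hr s m⟩

theorem IsSubBimodule.comap {P : AddSubgroup N} (hP : IsSubBimodule S P) (f : M →+ N)
    (hl : ∀ (s : S) m, f (s • m) = s • f m) (hr : ∀ (s : Sᵐᵒᵖ) m, f (s • m) = s • f m) :
    IsSubBimodule S (P.comap f) :=
  ⟨fun s m hm => by simpa [hl] using hP.1 s _ hm, fun s m hm => by simpa [hr] using hP.2 s _ hm⟩

/-- The sub-bimodule `{n | (0, n) ∈ W}` cannot be all of `N`: containing `y` would put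
`(x, 0) = (x, y) - (0, y)` in `W`. -/
theorem IsSubBimodule.eq_zero_of_zero_mk_mem (hN : IsSimpleBimodule S N)
    {W : AddSubgroup (M × N)} (hW : IsSubBimodule S W) {x : M} {y : N} (hxy : (x, y) ∈ W)
    (hx : (x, (0 : N)) ∉ W) (n : N) (hn : ((0 : M), n) ∈ W) : n = 0 := by
  by_contra hn0
  have hK : W.comap (AddMonoidHom.inr M N) = ⊤ :=
    hN.eq_top_of_mem (hW.comap _ (fun _ _ => by simp) fun _ _ => by simp) hn hn0
  have hy : ((0 : M), y) ∈ W := (AddSubgroup.eq_top_iff' _).1 hK y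
  exact hx (by simpa using W.sub_mem hxy hy)

theorem exists_isBimoduleIso_of_isSubBimodule_prod (hM : IsSimpleBimodule S M)
    (hN : IsSimpleBimodule S N) {W : AddSubgroup (M × N)} (hW : IsSubBimodule S W)
    (hfst : ∀ m, (m, (0 : N)) ∈ W → m = 0) {x : M} {y : N} (hxy : (x, y) ∈ W) (hx : x ≠ 0) :
    ∃ f : M ≃+ N, IsBimoduleIso S f := by
  have hsnd := hW.eq_zero_of_zero_mk_mem hN hxy (fun h => hx (hfst x h))
  have hy : y ≠ 0 := by
    rintro rfl
    exact hx (hfst x hxy)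
  obtain ⟨e, he⟩ := W.exists_addEquiv_mem_iff_of_prod hfst hsnd
    (hM.eq_top_of_mem (hW.map _ (fun _ _ => rfl) fun _ _ => rfl) ⟨_, hxy, rfl⟩ hx)
    (hN.eq_top_of_mem (hW.map _ (fun _ _ => rfl) fun _ _ => rfl) ⟨_, hxy, rfl⟩ hy)
  have hgraph (m : M) : (m, e m) ∈ W := (he m _).2 rfl
  exact ⟨e, fun s m => ((he _ _).1 (hW.1 s _ (hgraph m))).symm,
    fun s m => ((he _ _).1 (hW.2 s _ (hgraph m))).symm⟩

end SubBimodule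

section BimoduleSpan

variable {S M : Type*} [Ring S] [AddCommGroup M] [Module S M] [Module Sᵐᵒᵖ M]

def twoSidedSum {n : ℕ} (s t : Fin n → S) (z : M) : M :=
  ∑ i, s i • op (t i) • z

theorem twoSidedSum_prod {N : Type*} [AddCommGroup N] [Module S N] [Module Sᵐᵒᵖ N]
    {n : ℕ} (s t : Fin n → S) (x : M) (y : N) :
    twoSidedSum s t (x, y) = (twoSidedSum s t x, twoSidedSum s t y) := by
  ext <;> simp [twoSidedSum, Prod.fst_sum, Prod.snd_sum]

variable (S) in
def bimoduleSpan (z : M) : AddSubgroup M where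
  carrier := {m | ∃ (n : ℕ) (s t : Fin n → S), twoSidedSum s t z = m}
  zero_mem' := ⟨0, Fin.elim0, Fin.elim0, by simp [twoSidedSum]⟩
  add_mem' := by
    rintro _ _ ⟨n₁, s₁, t₁, rfl⟩ ⟨n₂, s₂, t₂, rfl⟩
    exact ⟨n₁ + n₂, Fin.append s₁ s₂, Fin.append t₁ t₂, by simp [twoSidedSum, Fin.sum_univ_add]⟩
  neg_mem' := by
    rintro _ ⟨n, s, t, rfl⟩
    exact ⟨n, -s, t, by simp [twoSidedSum]⟩

variable (S) in
theorem self_mem_bimoduleSpan (z : M) : z ∈ bimoduleSpan S z :=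
  ⟨1, 1, 1, by simp [twoSidedSum]⟩

theorem isSubBimodule_bimoduleSpan [SMulCommClass S Sᵐᵒᵖ M] (z : M) :
    IsSubBimodule S (bimoduleSpan S z) := by
  constructor
  · rintro a _ ⟨n, s, t, rfl⟩
    exact ⟨n, fun i => a * s i, t, by simp [twoSidedSum, Finset.smul_sum, mul_smul]⟩
  · rintro a _ ⟨n, s, t, rfl⟩
    refine ⟨n, s, fun i => t i * a.unop, ?_⟩
    simp only [twoSidedSum, Finset.smul_sum, op_mul, mul_smul]
    exact Finset.sum_congr rfl fun i _ => smul_comm (s i) a _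

end BimoduleSpan

theorem stmt6_general {S M N : Type*} [Ring S] [AddCommGroup M] [AddCommGroup N]
    [Module S M] [Module Sᵐᵒᵖ M] [SMulCommClass S Sᵐᵒᵖ M]
    [Module S N] [Module Sᵐᵒᵖ N] [SMulCommClass S Sᵐᵒᵖ N]
    (hM : IsSimpleBimodule S M) (hN : IsSimpleBimodule S N)
    (hiso : ¬ ∃ f : M ≃+ N, IsBimoduleIso S f)
    (x : M) (hx : x ≠ 0) (y : N) :
    ∃ (n : ℕ) (s t : Fin n → S),
      (∑ i, s i • (MulOpposite.op (t i)) • x) ≠ 0 ∧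
      (∑ i, s i • (MulOpposite.op (t i)) • y) = 0 := by
  by_contra! h
  refine hiso (exists_isBimoduleIso_of_isSubBimodule_prod hM hN
    (isSubBimodule_bimoduleSpan (x, y)) ?_ (self_mem_bimoduleSpan S (x, y)) hx)
  rintro m ⟨n, s, t, hst⟩
  rw [twoSidedSum_prod, Prod.mk.injEq] at hst
  obtain ⟨rfl, hy⟩ := hst
  by_contra hm
  exact h n s t hm hy

/-- Let `S` be a unital ring and `M`, `N` nonzero simple `S`-bimodules
which are not isomorphic. Then for any nonzero `x ∈ M` and nonzero `y ∈ N` there exist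
`n ∈ ℕ` and `s₁,…,sₙ, t₁,…,tₙ ∈ S` with `Σ sᵢ x tᵢ ≠ 0` and `Σ sᵢ y tᵢ = 0`. -/
theorem stmt6 {S M N : Type*} [Ring S] [AddCommGroup M] [AddCommGroup N]
    [Module S M] [Module Sᵐᵒᵖ M] [SMulCommClass S Sᵐᵒᵖ M]
    [Module S N] [Module Sᵐᵒᵖ N] [SMulCommClass S Sᵐᵒᵖ N]
    (hM : IsSimpleBimodule S M) (hN : IsSimpleBimodule S N)
    (hiso : ¬ ∃ f : M ≃+ N, IsBimoduleIso S f)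
    (x : M) (hx : x ≠ 0) (y : N) (hy : y ≠ 0) :
    ∃ (n : ℕ) (s t : Fin n → S),
      (∑ i, s i • (MulOpposite.op (t i)) • x) ≠ 0 ∧
      (∑ i, s i • (MulOpposite.op (t i)) • y) = 0 :=
  stmt6_general hM hN hiso x hx y
end

section
/- Let R be a G-graded unital ring such that each R_g is a nonzero simple R_e-bimodule and R_g ≅ R_h (as R_e-bimodules) only when g = h. If P is an R_e-sub-bimodule of R and x ∈ P is nonzero, then R_g ⊆ P for every g in the support of x. In particular, P = ⊕_{s∈S} R_s for some subset S ⊆ G. -/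
open DirectSum Pointwise

/-! Induct on the size of the support of `x ∈ P`, and let `M ⊆ P` be the sub-bimodule of elements
of `P` supported inside `supp x`. If some nonzero `y ∈ M` has strictly smaller support, induction
gives `R_h ⊆ P` for some `h ∈ supp y`; then either `h = g`, or `x - x_h ∈ P` has smaller support
and still contains `g`. Otherwise every nonzero element of `M` has the full support of `x`, so for
each `h ∈ supp x` the projection `M → R_h` is injective, and it is onto since its image is a
nonzero sub-bimodule of the simple `R_h`. All these `R_h` are then isomorphic to `M`, hence to each
other, so `supp x = {g}`; now `x ≠ 0` lies in the sub-bimodule `P ∩ R_g` of `R_g`, whence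
`R_g ⊆ P`. -/

namespace Controlled

open GradedRing

section Bimodules

variable {G R : Type*} [AddGroup G] [Ring R] {𝒜 : G → AddSubgroup R}

theorem IsSubBimodule.inf {P Q : AddSubgroup R} (hP : IsSubBimodule 𝒜 P)
    (hQ : IsSubBimodule 𝒜 Q) : IsSubBimodule 𝒜 (P ⊓ Q) := fun a ha x hx =>
  ⟨⟨(hP a ha x hx.1).1, (hQ a ha x hx.2).1⟩, ⟨(hP a ha x hx.1).2, (hQ a ha x hx.2).2⟩⟩

theorem isSubBimodule_component [SetLike.GradedMonoid 𝒜] (g : G) : IsSubBimodule 𝒜 (𝒜 g) :=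
  fun _ ha _ hx =>
    ⟨by simpa using SetLike.mul_mem_graded ha hx, by simpa using SetLike.mul_mem_graded hx ha⟩

theorem IsSimpleBimod.eq_of_le_of_mem {Q N : AddSubgroup R} (hQ : IsSimpleBimod 𝒜 Q)
    (hN : IsSubBimodule 𝒜 N) (hNQ : N ≤ Q) {x : R} (hx : x ∈ N) (hx0 : x ≠ 0) : N = Q :=
  (hQ.2 N hNQ hN).resolve_left fun hbot => hx0 (by simpa [hbot] using hx)

namespace BimodIso

variable {P Q T : AddSubgroup R}

noncomputable def ofBijective (f : R →+ R) (hleft : ∀ a ∈ 𝒜 0, ∀ x, f (a * x) = a * f x)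
    (hright : ∀ a ∈ 𝒜 0, ∀ x, f (x * a) = f x * a) (hmaps : ∀ x ∈ P, f x ∈ Q)
    (hinj : ∀ x ∈ P, f x = 0 → x = 0) (hsurj : ∀ y ∈ Q, ∃ x ∈ P, f x = y) :
    BimodIso 𝒜 P Q where
  toEquiv := AddEquiv.ofBijective ((f.comp P.subtype).codRestrict Q fun x => hmaps x x.2)
    ⟨(injective_iff_map_eq_zero _).2 fun x hx =>
        Subtype.ext (hinj x x.2 (congrArg Subtype.val hx)),
      fun y => (hsurj y y.2).elim fun x hx => ⟨⟨x, hx.1⟩, Subtype.ext hx.2⟩⟩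
  map_left a x ha _ _ := hleft a ha x
  map_right a x ha _ _ := hright a ha x

def symm (e : BimodIso 𝒜 P Q) (hP : IsSubBimodule 𝒜 P) : BimodIso 𝒜 Q P where
  toEquiv := e.toEquiv.symm
  map_left a y ha hy hay := by
    set x := e.toEquiv.symm ⟨y, hy⟩
    have hax : a * (x : R) ∈ P := (hP a ha x x.2).1
    have : e.toEquiv ⟨a * x, hax⟩ = ⟨a * y, hay⟩ :=
      Subtype.ext <| by simp [e.map_left a x ha x.2 hax, x]
    rw [← this, AddEquiv.symm_apply_apply]
  map_right a y ha hy hya := by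
    set x := e.toEquiv.symm ⟨y, hy⟩
    have hxa : (x : R) * a ∈ P := (hP a ha x x.2).2
    have : e.toEquiv ⟨x * a, hxa⟩ = ⟨y * a, hya⟩ :=
      Subtype.ext <| by simp [e.map_right a x ha x.2 hxa, x]
    rw [← this, AddEquiv.symm_apply_apply]

def trans (e : BimodIso 𝒜 P Q) (e' : BimodIso 𝒜 Q T) : BimodIso 𝒜 P T where
  toEquiv := e.toEquiv.trans e'.toEquiv
  map_left a x ha hx hax := by
    have hq := e.map_left a x ha hx hax
    have hmem : a * (e.toEquiv ⟨x, hx⟩ : R) ∈ Q := hq ▸ (e.toEquiv _).2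
    rw [AddEquiv.trans_apply, AddEquiv.trans_apply, show e.toEquiv ⟨a * x, hax⟩ = ⟨_, hmem⟩ from
      Subtype.ext hq]
    exact e'.map_left a _ ha _ hmem
  map_right a x ha hx hxa := by
    have hq := e.map_right a x ha hx hxa
    have hmem : (e.toEquiv ⟨x, hx⟩ : R) * a ∈ Q := hq ▸ (e.toEquiv _).2
    rw [AddEquiv.trans_apply, AddEquiv.trans_apply, show e.toEquiv ⟨x * a, hxa⟩ = ⟨_, hmem⟩ from
      Subtype.ext hq]
    exact e'.map_right a _ ha _ hmem

end BimodIso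

end Bimodules

section Graded

variable {G R : Type*} [AddGroup G] [DecidableEq G] [Ring R] (𝒜 : G → AddSubgroup R)
  [GradedRing 𝒜]

theorem proj_mem (g : G) (x : R) : proj 𝒜 g x ∈ 𝒜 g := (decompose 𝒜 x g).2

theorem proj_mul_of_left_mem_zero {a : R} (ha : a ∈ 𝒜 0) (g : G) (x : R) :
    proj 𝒜 g (a * x) = a * proj 𝒜 g x :=
  coe_decompose_mul_of_left_mem_zero 𝒜 ha

theorem proj_mul_of_right_mem_zero {a : R} (ha : a ∈ 𝒜 0) (g : G) (x : R) :
    proj 𝒜 g (x * a) = proj 𝒜 g x * a :=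
  coe_decompose_mul_of_right_mem_zero 𝒜 ha

theorem proj_sub_proj (x : R) {g h : G} :
    proj 𝒜 g (x - proj 𝒜 h x) = if h = g then 0 else proj 𝒜 g x := by
  split_ifs with hhg
  · subst hhg
    rw [map_sub, proj_apply 𝒜 _ (proj 𝒜 h x), decompose_of_mem_same 𝒜 (proj_mem 𝒜 h x), sub_self]
  · rw [map_sub, proj_apply 𝒜 _ (proj 𝒜 h x), decompose_of_mem_ne 𝒜 (proj_mem 𝒜 h x) hhg,
      sub_zero]

theorem exists_proj_ne_zero {x : R} (hx : x ≠ 0) : ∃ g, proj 𝒜 g x ≠ 0 := by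
  by_contra! h
  exact hx ((decompose 𝒜).injective (DFinsupp.ext fun g => by simpa using h g))

def supportedIn (S : Set G) : AddSubgroup R := ⨅ g ∈ Sᶜ, (proj 𝒜 g).ker

theorem mem_supportedIn {S : Set G} {x : R} :
    x ∈ supportedIn 𝒜 S ↔ ∀ g ∉ S, proj 𝒜 g x = 0 := by
  simp [supportedIn]

variable {𝒜} in
theorem IsSubBimodule.map_proj {P : AddSubgroup R} (hP : IsSubBimodule 𝒜 P) (g : G) :
    IsSubBimodule 𝒜 (P.map (proj 𝒜 g)) := by
  rintro a ha _ ⟨x, hx, rfl⟩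
  exact ⟨⟨a * x, (hP a ha x hx).1, proj_mul_of_left_mem_zero 𝒜 ha g x⟩,
    ⟨x * a, (hP a ha x hx).2, proj_mul_of_right_mem_zero 𝒜 ha g x⟩⟩

theorem isSubBimodule_supportedIn (S : Set G) : IsSubBimodule 𝒜 (supportedIn 𝒜 S) := by
  intro a ha x hx
  simp only [mem_supportedIn] at hx ⊢
  exact ⟨fun g hg => by rw [proj_mul_of_left_mem_zero 𝒜 ha, hx g hg, mul_zero],
    fun g hg => by rw [proj_mul_of_right_mem_zero 𝒜 ha, hx g hg, zero_mul]⟩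

variable {𝒜}

theorem nonempty_bimodIso_component (hsimple : ∀ g, IsSimpleBimod 𝒜 (𝒜 g))
    {M : AddSubgroup R} (hM : IsSubBimodule 𝒜 M) {g : G}
    (hfull : ∀ y ∈ M, y ≠ 0 → proj 𝒜 g y ≠ 0) {x : R} (hxM : x ∈ M) (hxg : proj 𝒜 g x ≠ 0) :
    Nonempty (BimodIso 𝒜 M (𝒜 g)) := by
  have himage : M.map (proj 𝒜 g) = 𝒜 g :=
    (hsimple g).eq_of_le_of_mem (hM.map_proj g) (AddSubgroup.map_le_iff_le_comap.2
      fun y _ => proj_mem 𝒜 g y) ⟨x, hxM, rfl⟩ hxg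
  refine ⟨.ofBijective (proj 𝒜 g) (fun a ha => proj_mul_of_left_mem_zero 𝒜 ha g)
    (fun a ha => proj_mul_of_right_mem_zero 𝒜 ha g) (fun y _ => proj_mem 𝒜 g y)
    (fun y hy => not_imp_not.1 (hfull y hy)) fun z hz => ?_⟩
  rw [← himage] at hz
  exact hz

theorem eq_of_forall_proj_ne_zero (hsimple : ∀ g, IsSimpleBimod 𝒜 (𝒜 g))
    (hiso : ∀ g h, Nonempty (BimodIso 𝒜 (𝒜 g) (𝒜 h)) → g = h) {M : AddSubgroup R}
    (hM : IsSubBimodule 𝒜 M) {x : R} (hxM : x ∈ M)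
    (hfull : ∀ y ∈ M, y ≠ 0 → ∀ g, proj 𝒜 g x ≠ 0 → proj 𝒜 g y ≠ 0) {g h : G}
    (hg : proj 𝒜 g x ≠ 0) (hh : proj 𝒜 h x ≠ 0) : g = h := by
  obtain ⟨eg⟩ :=
    nonempty_bimodIso_component hsimple hM (fun y hy hy0 => hfull y hy hy0 g hg) hxM hg
  obtain ⟨eh⟩ :=
    nonempty_bimodIso_component hsimple hM (fun y hy hy0 => hfull y hy hy0 h hh) hxM hh
  exact hiso g h ⟨(eg.symm hM).trans eh⟩

section Support

variable (𝒜) [∀ (g : G) (x : 𝒜 g), Decidable (x ≠ 0)]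

theorem mem_supportedIn_iff_support_subset {S : Set G} {x : R} :
    x ∈ supportedIn 𝒜 S ↔ ↑(decompose 𝒜 x).support ⊆ S := by
  simp only [mem_supportedIn, Set.subset_def, Finset.mem_coe, mem_support_iff]
  exact forall_congr' fun g => not_imp_comm

theorem support_sub_proj (x : R) (h : G) :
    (decompose 𝒜 (x - proj 𝒜 h x)).support = (decompose 𝒜 x).support.erase h := by
  ext g
  rw [Finset.mem_erase, mem_support_iff, mem_support_iff, proj_sub_proj]
  split_ifs with hhg <;> simp [hhg, eq_comm]

theorem mem_of_support_subset_singleton {x : R} {g : G}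
    (hx : (decompose 𝒜 x).support ⊆ {g}) : x ∈ 𝒜 g := by
  rw [← sum_support_decompose 𝒜 x]
  exact sum_mem fun h hh => Finset.mem_singleton.1 (hx hh) ▸ proj_mem 𝒜 h x

end Support

theorem le_of_proj_ne_zero (hsimple : ∀ g, IsSimpleBimod 𝒜 (𝒜 g))
    (hiso : ∀ g h, Nonempty (BimodIso 𝒜 (𝒜 g) (𝒜 h)) → g = h) {P : AddSubgroup R}
    (hP : IsSubBimodule 𝒜 P) {x : R} (hxP : x ∈ P) {g : G} (hg : proj 𝒜 g x ≠ 0) :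
    𝒜 g ≤ P := by
  classical
  induction hn : (decompose 𝒜 x).support.card using Nat.strong_induction_on
    generalizing x g with
  | _ n ih =>
  subst hn
  set M := P ⊓ supportedIn 𝒜 ↑(decompose 𝒜 x).support
  have hM : IsSubBimodule 𝒜 M := hP.inf (isSubBimodule_supportedIn 𝒜 _)
  by_cases hproper : ∃ y ∈ M, y ≠ 0 ∧ ∃ k, proj 𝒜 k x ≠ 0 ∧ proj 𝒜 k y = 0
  · obtain ⟨y, hyM, hy0, k, hkx, hky⟩ := hproper
    obtain ⟨hyP, hyx⟩ := AddSubgroup.mem_inf.1 hyM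
    rw [mem_supportedIn_iff_support_subset] at hyx
    have hlt : (decompose 𝒜 y).support.card < (decompose 𝒜 x).support.card :=
      Finset.card_lt_card (Finset.ssubset_iff_subset_ne.2 ⟨hyx, fun heq =>
        (mem_support_iff 𝒜 y k).1 (heq ▸ (mem_support_iff 𝒜 x k).2 hkx) hky⟩)
    obtain ⟨h, hh⟩ := exists_proj_ne_zero 𝒜 hy0
    have hAh : 𝒜 h ≤ P := ih _ hlt hyP hh rfl
    by_cases hhg : h = g
    · exact hhg ▸ hAh
    · refine ih _ ?_ (sub_mem hxP (hAh (proj_mem 𝒜 h x))) (g := g) ?_ rfl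
      · rw [support_sub_proj]
        exact Finset.card_erase_lt_of_mem (hyx ((mem_support_iff 𝒜 y h).2 hh))
      · rwa [proj_sub_proj, if_neg hhg]
  · push Not at hproper
    have hxM : x ∈ M := ⟨hxP, (mem_supportedIn_iff_support_subset 𝒜).2 subset_rfl⟩
    have hxg : x ∈ 𝒜 g := mem_of_support_subset_singleton 𝒜 fun k hk =>
      Finset.mem_singleton.2 (eq_of_forall_proj_ne_zero hsimple hiso hM hxM hproper
        ((mem_support_iff 𝒜 x k).1 hk) hg)
    have hx0 : x ≠ 0 := fun hx0 => hg (by simp [hx0])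
    rw [← (hsimple g).eq_of_le_of_mem (hP.inf (isSubBimodule_component g)) inf_le_right
      ⟨hxP, hxg⟩ hx0]
    exact inf_le_left

theorem eq_RH_of_forall_proj_ne_zero {P : AddSubgroup R}
    (hP : ∀ x ∈ P, ∀ g, proj 𝒜 g x ≠ 0 → 𝒜 g ≤ P) : P = RH 𝒜 {g | 𝒜 g ≤ P} := by
  classical
  refine le_antisymm (fun x hx => ?_) (iSup₂_le fun g hg => hg)
  rw [← sum_support_decompose 𝒜 x]
  exact sum_mem fun g hg =>
    le_biSup 𝒜 (hP x hx g ((mem_support_iff 𝒜 x g).1 hg)) (proj_mem 𝒜 g x)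

end Graded

end Controlled

variable {G R : Type*} [AddGroup G] [DecidableEq G] [Ring R]

/-- If each `R_g` is a nonzero simple `R_e`-bimodule and `R_g ≅ R_h` only
for `g = h`, then for any `R_e`-sub-bimodule `P ⊆ R` and nonzero `x ∈ P`, `R_g ⊆ P`
for every `g` in the support of `x`; in particular `P = ⊕_{s∈S} R_s` for some `S ⊆ G`. -/
theorem stmt7 (𝒜 : G → AddSubgroup R) [GradedRing 𝒜]
    (hsimple : ∀ g : G, Controlled.IsSimpleBimod 𝒜 (𝒜 g))
    (hiso : ∀ g h : G, Nonempty (Controlled.BimodIso 𝒜 (𝒜 g) (𝒜 h)) → g = h)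
    (P : AddSubgroup R) (hP : Controlled.IsSubBimodule 𝒜 P) :
    (∀ x ∈ P, x ≠ 0 → ∀ g : G, (DirectSum.decompose 𝒜 x g : R) ≠ 0 → 𝒜 g ≤ P) ∧
    ∃ S : Set G, P = Controlled.RH 𝒜 S := by
  have hle : ∀ x ∈ P, ∀ g, GradedRing.proj 𝒜 g x ≠ 0 → 𝒜 g ≤ P :=
    fun _ hx _ hg => Controlled.le_of_proj_ne_zero hsimple hiso hP hx hg
  exact ⟨fun x hx _ g hg => hle x hx g hg, _, Controlled.eq_RH_of_forall_proj_ne_zero hle⟩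
end

section
/- Let R be a G-graded unital ring which is G-controlled. If R_g R_{g⁻¹} = {0} for some g ∈ G, then R_{g⁻¹} R_g = {0}. -/
open DirectSum Pointwise

variable {G R : Type*} [AddGroup G] [DecidableEq G] [Ring R]


/-- If `R` is `G`-controlled and `R_g R_{g⁻¹} = {0}`, then
`R_{g⁻¹} R_g = {0}`. -/
theorem stmt10 (𝒜 : G → AddSubgroup R) [GradedRing 𝒜]
    (hc : Controlled.IsControlled 𝒜) (g : G)
    (h : Controlled.mulSub (𝒜 g) (𝒜 (-g)) = ⊥) :
    Controlled.mulSub (𝒜 (-g)) (𝒜 g) = ⊥ := by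
  classical
  set P := Controlled.mulSub (𝒜 (-g)) (𝒜 g) with hPdef
  have hPle : P ≤ 𝒜 0 := by
    rw [hPdef, Controlled.mulSub]
    refine (AddSubgroup.closure_le _).2 ?_
    rintro x ⟨r, hr, s, hs, rfl⟩
    simpa using SetLike.mul_mem_graded hr hs
  have hbm : Controlled.IsSubBimodule 𝒜 P := by
    intro a ha x hx
    constructor
    · refine AddSubgroup.closure_induction (fun y hy => ?_) (by simpa using zero_mem P) ?_ ?_ hx
      · obtain ⟨r, hr, s, hs, rfl⟩ := hy
        rw [← mul_assoc]
        refine AddSubgroup.subset_closure ?_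
        exact Set.mul_mem_mul (by simpa using SetLike.mul_mem_graded ha hr) hs
      · intro y z _ _ hy hz; rw [mul_add]; exact add_mem hy hz
      · intro y _ hy; rw [mul_neg]; exact neg_mem hy
    · refine AddSubgroup.closure_induction (fun y hy => ?_) (by simpa using zero_mem P) ?_ ?_ hx
      · obtain ⟨r, hr, s, hs, rfl⟩ := hy
        rw [mul_assoc]
        refine AddSubgroup.subset_closure ?_
        exact Set.mul_mem_mul hr (by simpa using SetLike.mul_mem_graded hs ha)
      · intro y z _ _ hy hz; rw [add_mul]; exact add_mem hy hz
      · intro y _ hy; rw [neg_mul]; exact neg_mem hy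
  have hAne : ∀ k : G, 𝒜 k ≠ ⊥ := by
    intro k hbot
    have h1 : Controlled.RH 𝒜 {k} = Controlled.RH 𝒜 (∅ : Set G) := by
      simp [Controlled.RH, hbot]
    have := hc.2.1 h1
    simp [Set.eq_empty_iff_forall_notMem] at this
  obtain ⟨H, hHP⟩ := hc.2.2.1 P hbm
  have hH0 : H ⊆ {0} := by
    intro k hk
    by_contra hk0
    have hle : 𝒜 k ≤ 𝒜 0 := by
      have h1 : 𝒜 k ≤ Controlled.RH 𝒜 H := le_biSup _ hk
      exact h1.trans (hHP ▸ hPle)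
    refine hAne k ?_
    ext x
    simp only [AddSubgroup.mem_bot]
    constructor
    · intro hx
      have hx0 : x ∈ 𝒜 0 := hle hx
      have e1 := DirectSum.decompose_of_mem_same 𝒜 hx0
      have e2 := DirectSum.decompose_of_mem_ne 𝒜 hx (by simpa using hk0)
      rw [← e1, e2]
    · rintro rfl; exact zero_mem _
  rcases Set.eq_empty_or_nonempty H with hE | ⟨k, hk⟩
  · rw [← hHP, hE]
    simp [Controlled.RH]
  · have hkH : H = {0} := hH0.antisymm (by rintro k' rfl; exact (hH0 hk) ▸ hk)
    -- so 𝒜 0 ≤ P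
    have h0P : 𝒜 0 ≤ P := by
      rw [← hHP, hkH]
      simp [Controlled.RH]
    exfalso
    refine hAne g ?_
    ext x
    simp only [AddSubgroup.mem_bot]
    constructor
    · intro hx
      have key : ∀ p ∈ P, x * p = 0 := by
        intro p hp
        refine AddSubgroup.closure_induction (fun y hy => ?_) (by simp) ?_ ?_ hp
        · obtain ⟨r, hr, s, hs, rfl⟩ := hy
          have hxr : x * r ∈ Controlled.mulSub (𝒜 g) (𝒜 (-g)) :=
            AddSubgroup.subset_closure (Set.mul_mem_mul hx hr)
          rw [h] at hxr
          rw [← mul_assoc, AddSubgroup.mem_bot.1 hxr, zero_mul]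
        · intro y z _ _ hy hz; rw [mul_add, hy, hz, add_zero]
        · intro y _ hy; rw [mul_neg, hy, neg_zero]
      have h1 : (1 : R) ∈ P := h0P (SetLike.one_mem_graded 𝒜)
      simpa using key 1 h1
    · rintro rfl; exact zero_mem _
end

section
/- Let R be a G-graded unital ring which is G-controlled. Then the following are equivalent: (i) R is graded simple; (ii) R is a simple ring; (iii) R is strongly G-graded (R_g R_h = R_{gh} for all g, h); (iv) the gradation is left non-degenerate (R_g R_{g⁻¹} ≠ {0} for all g with R_g ≠ 0). -/
open DirectSum Pointwise

variable {G R : Type*} [AddGroup G] [DecidableEq G] [Ring R]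

/-!
Since every `R_e`-sub-bimodule is some `R_H` and `H ↦ R_H` is injective, each `R_g` is nonzero and
a sub-bimodule of `R_g` is `0` or `R_g`. Hence every product `R_g R_h` is `0` or `R_{g+h}`, and
every two-sided ideal, being some `R_H`, is graded. If `R_g R_{-g} ≠ 0` then `1 ∈ R_g R_{-g}`;
this yields strong grading, and an ideal containing some `R_h` then contains `1`. Conversely, if
`R_g R_{-g} = 0`, the same dichotomy shows that every `r a s` with `a ∈ R_g` has zero component
of degree `0`, so the ideal generated by `R_g` is proper and nonzero.
-/

namespace Controlled

section mulSub

variable {A A' B B' : AddSubgroup R} {x y : R}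

theorem mul_mem_mulSub {a b : R} (ha : a ∈ A) (hb : b ∈ B) : a * b ∈ mulSub A B :=
  AddSubgroup.subset_closure (Set.mul_mem_mul ha hb)

theorem mulSub_le {C : AddSubgroup R} (h : ∀ a ∈ A, ∀ b ∈ B, a * b ∈ C) : mulSub A B ≤ C :=
  (AddSubgroup.closure_le C).mpr (Set.mul_subset_iff.mpr h)

theorem mul_mem_mulSub_of_forall_mul_mem (hA : ∀ a ∈ A, x * a ∈ A') (hy : y ∈ mulSub A B) :
    x * y ∈ mulSub A' B :=
  mulSub_le (C := (mulSub A' B).comap (AddMonoidHom.mulLeft x))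
    (fun a ha b hb => by simpa [mul_assoc] using mul_mem_mulSub (hA a ha) hb) hy

theorem mul_mem_mulSub_of_forall_mem_mul (hB : ∀ b ∈ B, b * x ∈ B') (hy : y ∈ mulSub A B) :
    y * x ∈ mulSub A B' :=
  mulSub_le (C := (mulSub A B').comap (AddMonoidHom.mulRight x))
    (fun a ha b hb => by simpa [mul_assoc] using mul_mem_mulSub ha (hB b hb)) hy

theorem mul_eq_zero_of_mem_mulSub_left (hA : ∀ a ∈ A, x * a = 0) (hy : y ∈ mulSub A B) :
    x * y = 0 :=
  mulSub_le (C := (AddMonoidHom.mulLeft x).ker)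
    (fun a ha b _ => by simp [← mul_assoc, hA a ha]) hy

theorem mul_eq_zero_of_mem_mulSub_right (hB : ∀ b ∈ B, b * x = 0) (hy : y ∈ mulSub A B) :
    y * x = 0 :=
  mulSub_le (C := (AddMonoidHom.mulRight x).ker)
    (fun a _ b hb => by simp [mul_assoc, hB b hb]) hy

end mulSub

/-- The largest two-sided ideal contained in the kernel of `f`. -/
def kerCore {M : Type*} [AddGroup M] (f : R →+ M) : TwoSidedIdeal R :=
  .mk' {x | ∀ r s, f (r * x * s) = 0} (by simp)
    (fun hx hy r s => by simp [mul_add, add_mul, hx r s, hy r s])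
    (fun hx r s => by simp [hx r s])
    (fun {x y} hy r s => by simpa [mul_assoc] using hy (r * x) s)
    (fun {x y} hx r s => by simpa [mul_assoc] using hx r (y * s))

theorem mem_kerCore {M : Type*} [AddGroup M] {f : R →+ M} {x : R} :
    x ∈ kerCore f ↔ ∀ r s, f (r * x * s) = 0 :=
  TwoSidedIdeal.mem_mk' ..

variable {𝒜 : G → AddSubgroup R}

section

omit [AddGroup G] [DecidableEq G]

theorem RH_empty : RH 𝒜 ∅ = ⊥ := by simp [RH]

theorem RH_singleton (g : G) : RH 𝒜 {g} = 𝒜 g := by simp [RH]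

theorem le_RH {H : Set G} {g : G} (hg : g ∈ H) : 𝒜 g ≤ RH 𝒜 H :=
  le_biSup 𝒜 hg

end

omit [DecidableEq G] in
theorem isSubBimodule_ofClass (I : TwoSidedIdeal R) : IsSubBimodule 𝒜 (.ofClass I) :=
  fun a _ x hx => ⟨I.mul_mem_left a x hx, I.mul_mem_right x a hx⟩

section graded

variable [GradedRing 𝒜]

theorem mulSub_le_graded (g h : G) : mulSub (𝒜 g) (𝒜 h) ≤ 𝒜 (g + h) :=
  mulSub_le fun _ ha _ hb => SetLike.mul_mem_graded ha hb

theorem isSubBimodule_mulSub (g h : G) : IsSubBimodule 𝒜 (mulSub (𝒜 g) (𝒜 h)) :=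
  fun _ ha _ hx =>
    ⟨mul_mem_mulSub_of_forall_mul_mem (fun _ hb => by simpa using SetLike.mul_mem_graded ha hb) hx,
     mul_mem_mulSub_of_forall_mem_mul (fun _ hb => by simpa using SetLike.mul_mem_graded hb ha) hx⟩

theorem proj_mem_RH {H : Set G} {x : R} (hx : x ∈ RH 𝒜 H) (g : G) :
    GradedRing.proj 𝒜 g x ∈ RH 𝒜 H := by
  refine (iSup₂_le fun h hh y hy => ?_ : RH 𝒜 H ≤ (RH 𝒜 H).comap (GradedRing.proj 𝒜 g)) hx
  obtain rfl | hne := eq_or_ne h g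
  · simpa [DirectSum.decompose_of_mem_same 𝒜 hy] using le_RH hh hy
  · simp [DirectSum.decompose_of_mem_ne 𝒜 hy hne]

end graded

namespace IsControlled

section

omit [DecidableEq G]

variable (hc : IsControlled 𝒜)
include hc

theorem ne_bot (g : G) : 𝒜 g ≠ ⊥ := fun h =>
  Set.singleton_ne_empty g (hc.2.1 (by rw [RH_singleton, RH_empty, h]))

theorem nontrivial : Nontrivial R := by
  obtain ⟨⟨x, _⟩, hx⟩ := AddSubgroup.ne_bot_iff_exists_ne_zero.mp (hc.ne_bot 0)
  exact nontrivial_of_ne x 0 (by simpa using hx)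

theorem exists_le_of_ne_bot {P : AddSubgroup R} (hP : IsSubBimodule 𝒜 P) (hne : P ≠ ⊥) :
    ∃ g, 𝒜 g ≤ P := by
  obtain ⟨H, rfl⟩ := hc.2.2.1 P hP
  obtain ⟨g, hg⟩ := Set.nonempty_iff_ne_empty.mpr (show H ≠ ∅ by rintro rfl; exact hne RH_empty)
  exact ⟨g, le_RH hg⟩

theorem eq_bot_or_eq_of_le {P : AddSubgroup R} (hP : IsSubBimodule 𝒜 P) {g : G}
    (hle : P ≤ 𝒜 g) : P = ⊥ ∨ P = 𝒜 g := by
  obtain ⟨H, rfl⟩ := hc.2.2.1 P hP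
  have hunion : H ∪ {g} = {g} := hc.2.1 <| by
    rw [RH_singleton, RH, iSup_union, ← RH]
    simpa using hle
  rcases Set.subset_singleton_iff_eq.mp (Set.union_eq_right.mp hunion) with rfl | rfl
  · exact .inl RH_empty
  · exact .inr (RH_singleton g)

end

variable [GradedRing 𝒜] (hc : IsControlled 𝒜)
include hc

theorem mulSub_eq_bot_or_eq (g h : G) :
    mulSub (𝒜 g) (𝒜 h) = ⊥ ∨ mulSub (𝒜 g) (𝒜 h) = 𝒜 (g + h) :=
  hc.eq_bot_or_eq_of_le (isSubBimodule_mulSub g h) (mulSub_le_graded g h)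

theorem one_mem_mulSub {g h : G} (hgh : g + h = 0) (hne : mulSub (𝒜 g) (𝒜 h) ≠ ⊥) :
    (1 : R) ∈ mulSub (𝒜 g) (𝒜 h) := by
  rw [(hc.mulSub_eq_bot_or_eq g h).resolve_left hne, hgh]
  exact SetLike.one_mem_graded 𝒜

theorem mulSub_eq_bot_symm {g h : G} (hgh : g + h = 0) (hbot : mulSub (𝒜 g) (𝒜 h) = ⊥) :
    mulSub (𝒜 h) (𝒜 g) = ⊥ := by
  by_contra hne
  have h1 := hc.one_mem_mulSub (add_eq_zero_comm.mp hgh) hne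
  refine hc.ne_bot g ((AddSubgroup.eq_bot_iff_forall _).mpr fun x hx => ?_)
  simpa using mul_eq_zero_of_mem_mulSub_left
    (fun a ha => by simpa [hbot] using mul_mem_mulSub hx ha) h1

/-- If `R_c R_g ≠ 0` it equals `R_{c+g}`; then `R_{c+g} R_d ≠ 0` would put `1` into
`R_d R_{c+g} = R_d R_c R_g`, whose elements kill `R_{-g}` from the left as `R_g R_{-g} = 0`. -/
theorem mul_mul_eq_zero {g c d : G} (hg : mulSub (𝒜 g) (𝒜 (-g)) = ⊥) (hcgd : c + g + d = 0)
    {r a s : R} (hr : r ∈ 𝒜 c) (ha : a ∈ 𝒜 g) (hs : s ∈ 𝒜 d) : r * a * s = 0 := by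
  rcases hc.mulSub_eq_bot_or_eq c g with hcg | hcg
  · simp [show r * a = 0 by simpa [hcg] using mul_mem_mulSub hr ha]
  have hbot : mulSub (𝒜 (c + g)) (𝒜 d) = ⊥ := by
    by_contra hne
    have hdk : d + (c + g) = 0 := add_eq_zero_comm.mp hcgd
    have h1 := hc.one_mem_mulSub hdk (mt (hc.mulSub_eq_bot_symm hdk) hne)
    refine hc.ne_bot (-g) ((AddSubgroup.eq_bot_iff_forall _).mpr fun x hx => ?_)
    refine (one_mul x).symm.trans (mul_eq_zero_of_mem_mulSub_right (fun b hb => ?_) h1)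
    exact mul_eq_zero_of_mem_mulSub_right
      (fun y hy => by simpa [hg] using mul_mem_mulSub hy hx) (hcg ▸ hb)
  have hras : r * a * s ∈ mulSub (𝒜 (c + g)) (𝒜 d) := mul_mem_mulSub (hcg ▸ mul_mem_mulSub hr ha) hs
  rwa [hbot, AddSubgroup.mem_bot] at hras

theorem proj_zero_mul_mul_eq_zero {g : G} (hg : mulSub (𝒜 g) (𝒜 (-g)) = ⊥) {a : R}
    (ha : a ∈ 𝒜 g) (r s : R) : GradedRing.proj 𝒜 0 (r * a * s) = 0 := by
  induction r using DirectSum.Decomposition.inductionOn 𝒜 with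
  | zero => simp
  | add r r' hr hr' => rw [add_mul, add_mul, map_add, hr, hr', add_zero]
  | @homogeneous c r =>
    have hra : (r : R) * a ∈ 𝒜 (c + g) := SetLike.mul_mem_graded r.2 ha
    rw [GradedRing.proj_apply, ← add_neg_cancel (c + g),
      DirectSum.coe_decompose_mul_add_of_left_mem 𝒜 hra]
    exact hc.mul_mul_eq_zero hg (add_neg_cancel _) r.2 ha (SetLike.coe_mem _)

theorem isGradedIdeal (I : TwoSidedIdeal R) : IsGradedIdeal 𝒜 I := fun x hx g => by
  obtain ⟨H, hH⟩ := hc.2.2.1 _ (isSubBimodule_ofClass I)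
  have hxg := proj_mem_RH (hH ▸ hx : x ∈ RH 𝒜 H) g
  rwa [hH] at hxg

theorem isSimpleRing_of_isGradedSimple (h : IsGradedSimple 𝒜) : IsSimpleRing R :=
  haveI := hc.nontrivial
  .of_eq_bot_or_eq_top fun I => h I (hc.isGradedIdeal I)

theorem mulSub_neg_ne_bot [IsSimpleRing R] (g : G) : mulSub (𝒜 g) (𝒜 (-g)) ≠ ⊥ := by
  intro hg
  obtain ⟨⟨a, ha⟩, ha0⟩ := AddSubgroup.ne_bot_iff_exists_ne_zero.mp (hc.ne_bot g)
  have haJ : a ∈ kerCore (GradedRing.proj 𝒜 0) :=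
    mem_kerCore.mpr (hc.proj_zero_mul_mul_eq_zero hg ha)
  have h1 := mem_kerCore.mp (IsSimpleRing.one_mem_of_ne_zero_mem _ (by simpa using ha0) haJ) 1 1
  rw [one_mul, mul_one, GradedRing.proj_apply,
    DirectSum.decompose_of_mem_same 𝒜 (SetLike.one_mem_graded 𝒜)] at h1
  exact one_ne_zero h1

theorem isStronglyGraded_of_mulSub_neg_ne_bot
    (h : ∀ g : G, 𝒜 g ≠ ⊥ → mulSub (𝒜 g) (𝒜 (-g)) ≠ ⊥) : IsStronglyGraded 𝒜 := by
  intro g k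
  refine le_antisymm (mulSub_le_graded g k) fun x hx => ?_
  have h1 : (1 : R) ∈ mulSub (𝒜 (-k)) (𝒜 k) :=
    hc.one_mem_mulSub (neg_add_cancel k) (by simpa using h (-k) (hc.ne_bot (-k)))
  simpa using mul_mem_mulSub_of_forall_mul_mem
    (fun a ha => by simpa using SetLike.mul_mem_graded hx ha) h1

theorem isSimpleRing_of_isStronglyGraded (h : IsStronglyGraded 𝒜) : IsSimpleRing R := by
  have := hc.nontrivial
  refine .of_eq_bot_or_eq_top fun I => or_iff_not_imp_left.mpr fun hI => ?_
  have hne : AddSubgroup.ofClass I ≠ ⊥ := fun h0 =>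
    hI (TwoSidedIdeal.ext fun x =>
      (SetLike.ext_iff.mp h0 x).trans (AddSubgroup.mem_bot.trans (TwoSidedIdeal.mem_bot R).symm))
  obtain ⟨g, hg⟩ := hc.exists_le_of_ne_bot (isSubBimodule_ofClass I) hne
  have h1 : (1 : R) ∈ mulSub (𝒜 (-g)) (𝒜 g) := by
    rw [h, neg_add_cancel]
    exact SetLike.one_mem_graded 𝒜
  exact I.one_mem_iff.mp <|
    mulSub_le (C := .ofClass I) (fun a _ b hb => I.mul_mem_left a b (hg hb)) h1

end IsControlled

end Controlled

/-- For a `G`-controlled ring `R`, the following are equivalent: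
(i) `R` is graded simple; (ii) `R` is simple; (iii) `R` is strongly `G`-graded;
(iv) the grading is left non-degenerate. -/
theorem stmt12 (𝒜 : G → AddSubgroup R) [GradedRing 𝒜]
    (hc : Controlled.IsControlled 𝒜) :
    [Controlled.IsGradedSimple 𝒜,
     IsSimpleRing R,
     Controlled.IsStronglyGraded 𝒜,
     (∀ g : G, 𝒜 g ≠ ⊥ → Controlled.mulSub (𝒜 g) (𝒜 (-g)) ≠ ⊥)].TFAE := by
  tfae_have 1 → 2 := hc.isSimpleRing_of_isGradedSimple
  tfae_have 2 → 1 := fun h I _ => h.simple.eq_bot_or_eq_top I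
  tfae_have 2 → 4 := fun _ g _ => hc.mulSub_neg_ne_bot g
  tfae_have 4 → 3 := hc.isStronglyGraded_of_mulSub_neg_ne_bot
  tfae_have 3 → 2 := hc.isSimpleRing_of_isStronglyGraded
  tfae_finish
end

section
/- Let R be a strongly G-graded unital ring with R_e a simple ring. If R_g ≅ R_e as R_e-bimodules implies g = e, then C_R(R_e) = Z(R_e). -/
/-!
If `x` centralizes `R_e`, so does each homogeneous component `y = x_g`. A nonzero such `y` is a
unit with inverse in `R_{-g}`: the ideal `R_{-g} y` of the simple ring `R_e` is nonzero because
`1 ∈ R_g R_{-g}`, so `b y = 1` for some `b ∈ R_{-g}`; and `y b = 1` because right multiplication by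
`y` is injective on `R_e`, its kernel being a proper ideal. Then `r ↦ r b` is an `R_e`-bimodule
isomorphism `R_g ≅ R_e`, which forces `g = e`. Hence `x = x_e ∈ R_e`.
-/

open DirectSum Pointwise

theorem IsSimpleRing.one_mem_of_map_mem {S R : Type*} [Ring S] [Ring R] [IsSimpleRing S]
    (f : S →+* R) (P : AddSubgroup R) (hleft : ∀ s, ∀ p ∈ P, f s * p ∈ P)
    (hright : ∀ s, ∀ p ∈ P, p * f s ∈ P) {s : S} (hs : f s ∈ P) (hs0 : s ≠ 0) :
    (1 : R) ∈ P := by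
  let I : TwoSidedIdeal S := .mk' (f ⁻¹' P) (by simp) (by simp +contextual [add_mem])
    (by simp +contextual) (by simp +contextual [hleft]) (by simp +contextual [hright])
  have hI : I = ⊤ := (IsSimpleRing.simple.eq_bot_or_eq_top I).resolve_left fun h => hs0 <| by
    rw [← TwoSidedIdeal.mem_bot, ← h, TwoSidedIdeal.mem_mk']; exact hs
  have h1 : (1 : S) ∈ I := hI ▸ TwoSidedIdeal.mem_top S
  simpa [I] using h1

theorem IsSimpleRing.eq_zero_of_map_mul_eq_zero {S R : Type*} [Ring S] [Ring R] [IsSimpleRing S]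
    (f : S →+* R) {y : R} (hy : y ≠ 0) (hcomm : ∀ s, Commute y (f s)) {s : S}
    (hs : f s * y = 0) : s = 0 := by
  by_contra hs0
  refine hy ?_
  simpa using IsSimpleRing.one_mem_of_map_mem f (AddMonoidHom.mulRight y).ker
    (fun t p (hp : p * y = 0) => show f t * p * y = 0 by rw [mul_assoc, hp, mul_zero])
    (fun t p (hp : p * y = 0) => show p * f t * y = 0 by
      rw [mul_assoc, ← (hcomm t).eq, ← mul_assoc, hp, zero_mul]) hs hs0

theorem DirectSum.Decomposition.mem_of_decompose_eq_zero {ι M σ : Type*} [DecidableEq ι]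
    [AddCommMonoid M] [SetLike σ M] [AddSubmonoidClass σ M] (ℳ : ι → σ) [Decomposition ℳ]
    {x : M} {i : ι} (h : ∀ j ≠ i, (decompose ℳ x j : M) = 0) : x ∈ ℳ i := by
  classical
  rw [← sum_support_decompose ℳ x]
  refine sum_mem fun j _ => ?_
  obtain rfl | hj := eq_or_ne j i
  · exact (decompose ℳ x j).2
  · rw [h j hj]; exact zero_mem _

namespace Controlled

variable {ι A : Type*} [AddGroup ι] [Ring A] {𝒜 : ι → AddSubgroup A}

theorem commute_decompose_of_commute [DecidableEq ι] [GradedRing 𝒜] {x : A}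
    (hx : ∀ a ∈ 𝒜 0, Commute x a) (g : ι) : ∀ a ∈ 𝒜 0, Commute (decompose 𝒜 x g : A) a :=
  fun a ha => by
    rw [Commute, SemiconjBy, ← coe_decompose_mul_of_right_mem_zero 𝒜 ha,
      ← coe_decompose_mul_of_left_mem_zero 𝒜 ha, (hx a ha).eq]

theorem IsStronglyGraded.exists_mul_ne_zero [SetLike.GradedMonoid 𝒜]
    (hstrong : IsStronglyGraded 𝒜) (g : ι) {y : A} (hy0 : y ≠ 0) :
    ∃ b ∈ 𝒜 (-g), b * y ≠ 0 := by
  by_contra! h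
  have hle : mulSub (𝒜 g) (𝒜 (-g)) ≤ (AddMonoidHom.mulRight y).ker :=
    (AddSubgroup.closure_le _).2 <| by
      rintro _ ⟨c, -, b, hb, rfl⟩
      show c * b * y = 0
      rw [mul_assoc, h b hb, mul_zero]
  have h1 : (1 : A) ∈ mulSub (𝒜 g) (𝒜 (-g)) := by
    rw [hstrong, add_neg_cancel]
    exact SetLike.GradedOne.one_mem
  exact hy0 (by simpa using hle h1)

variable [SetLike.GradedMonoid 𝒜] [IsSimpleRing (𝒜 0)] {g : ι} {y : A}

theorem exists_mul_eq_one_of_commute (hstrong : IsStronglyGraded 𝒜) (hy : y ∈ 𝒜 g)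
    (hy0 : y ≠ 0) (hcomm : ∀ a ∈ 𝒜 0, Commute y a) : ∃ b ∈ 𝒜 (-g), b * y = 1 := by
  obtain ⟨d, hd, hdy⟩ := hstrong.exists_mul_ne_zero g hy0
  have hdy0 : d * y ∈ 𝒜 0 := by simpa using SetLike.mul_mem_graded hd hy
  simpa using IsSimpleRing.one_mem_of_map_mem (S := 𝒜 0) (SetLike.GradeZero.subring 𝒜).subtype
    ((𝒜 (-g)).map (AddMonoidHom.mulRight y))
    (by rintro a _ ⟨b, hb, rfl⟩
        exact ⟨a * b, by simpa using SetLike.mul_mem_graded a.2 hb, mul_assoc _ _ _⟩)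
    (by rintro a _ ⟨b, hb, rfl⟩
        refine ⟨b * a, by simpa using SetLike.mul_mem_graded hb a.2, ?_⟩
        show b * a * y = b * y * a
        rw [mul_assoc, ← (hcomm a a.2).eq, mul_assoc])
    (s := ⟨d * y, hdy0⟩) ⟨d, hd, rfl⟩ (by simpa [Subtype.ext_iff] using hdy)

theorem mul_eq_one_of_commute (hy : y ∈ 𝒜 g) (hy0 : y ≠ 0) (hcomm : ∀ a ∈ 𝒜 0, Commute y a)
    {b : A} (hb : b ∈ 𝒜 (-g)) (hby : b * y = 1) : y * b = 1 := by
  have hyb : y * b - 1 ∈ 𝒜 0 :=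
    sub_mem (by simpa using SetLike.mul_mem_graded hy hb) SetLike.GradedOne.one_mem
  have h := IsSimpleRing.eq_zero_of_map_mul_eq_zero (S := 𝒜 0)
    (SetLike.GradeZero.subring 𝒜).subtype hy0 (fun a => hcomm a a.2) (s := ⟨_, hyb⟩)
    (show (y * b - 1) * y = 0 by rw [sub_mul, mul_assoc, hby, mul_one, one_mul, sub_self])
  simpa [Subtype.ext_iff, sub_eq_zero] using h

def bimodIsoOfMulEqOne {b : A} (hy : y ∈ 𝒜 g) (hb : b ∈ 𝒜 (-g)) (hby : b * y = 1)
    (hyb : y * b = 1) (hcomm : ∀ a ∈ 𝒜 0, Commute y a) : BimodIso 𝒜 (𝒜 g) (𝒜 0) where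
  toEquiv :=
    { toFun x := ⟨x * b, by simpa using SetLike.mul_mem_graded x.2 hb⟩
      invFun a := ⟨a * y, by simpa using SetLike.mul_mem_graded a.2 hy⟩
      left_inv x := Subtype.ext <| by simp [mul_assoc, hby]
      right_inv a := Subtype.ext <| by simp [mul_assoc, hyb]
      map_add' x x' := Subtype.ext <| add_mul _ _ _ }
  map_left _ _ _ _ _ := mul_assoc _ _ _
  map_right a x ha _ _ := by
    have hba : Commute b a := ((hcomm a ha).units_inv_left (u := ⟨y, b, hyb, hby⟩))
    simp [mul_assoc, hba.eq]

theorem nonempty_bimodIso_of_commute (hstrong : IsStronglyGraded 𝒜) (hy : y ∈ 𝒜 g)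
    (hy0 : y ≠ 0) (hcomm : ∀ a ∈ 𝒜 0, Commute y a) : Nonempty (BimodIso 𝒜 (𝒜 g) (𝒜 0)) :=
  let ⟨_, hb, hby⟩ := exists_mul_eq_one_of_commute hstrong hy hy0 hcomm
  ⟨bimodIsoOfMulEqOne hy hb hby (mul_eq_one_of_commute hy hy0 hcomm hb hby) hcomm⟩

end Controlled

variable {G R : Type*} [AddGroup G] [DecidableEq G] [Ring R]

/-- If `R` is strongly `G`-graded, `R_e` is simple, and `R_g ≅ R_e`
(as `R_e`-bimodules) implies `g = e`, then `C_R(R_e) = Z(R_e)`. -/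
theorem stmt14 (𝒜 : G → AddSubgroup R) [GradedRing 𝒜]
    (hstrong : Controlled.IsStronglyGraded 𝒜)
    (hsimple : IsSimpleRing ↥(𝒜 0))
    (hinj : ∀ g : G, Nonempty (Controlled.BimodIso 𝒜 (𝒜 g) (𝒜 0)) → g = 0) :
    Controlled.CentralizerEqCenter 𝒜 := by
  have := hsimple
  ext x
  refine ⟨fun hx => ⟨?_, hx⟩, And.right⟩
  refine Decomposition.mem_of_decompose_eq_zero 𝒜 fun g hg => by_contra fun hxg => hg ?_
  exact hinj g <| Controlled.nonempty_bimodIso_of_commute hstrong (decompose 𝒜 x g).2 hxg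
    (Controlled.commute_decompose_of_commute hx g)
end
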